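/- arXiv:2502.02888 — 7 statements merged into one kernel-verified Lean document; each statement's English description precedes it below -/
import Mathlib

section
/- If n > 1, the matrix RS-algebra A = F^n ⊕ M_n(F) is a simple algebra: its only two-sided ideals are 0 and A. -/
/-- The matrix RS-algebra `F^n ⊕ M_n(F)`. -/
def rsMul (F : Type*) [Field F] (n : ℕ) :
    ((Fin n → F) × Matrix (Fin n) (Fin n) F) →
    ((Fin n → F) × Matrix (Fin n) (Fin n) F) →
    ((Fin n → F) × Matrix (Fin n) (Fin n) F) :=
  fun a b =>
    (Matrix.vecMul a.1 b.2 + Matrix.vecMul b.1 a.2,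
     a.2 * b.2 + (a.2 * Matrix.diagonal b.1 - Matrix.diagonal b.1 * a.2))

/-!
A nonzero ideal `I` contains a nonzero pure vector `(w, 0)`: either a nonzero element already
is one, or multiplying a nonzero element `(v, A)` on the left by `(eᵢ, 0)` extracts the row
`(Aᵢ, 0)`. Right multiplication by `(0, M)` sends `(w, 0)` to `(w M, 0)`, and every vector has
this form, so `F^n × 0 ⊆ I`. Left multiplication of `(u, 0)` by `(0, M)` then leaves the
commutator `(0, M diag(u) - diag(u) M)` in `I`, which for `M = E_jk`, `u = e_k` with `j ≠ k`
(possible as `n > 1`) is `(0, E_jk)` itself. The matrices `M` with `(0, M) ∈ I` form a nonzero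
two-sided ideal of the simple ring `M_n(F)`, hence all of it.
-/

open Matrix

namespace RSAlgebra

variable {F : Type*} [Field F] {n : ℕ}

@[simp]
lemma rsMul_vec_left (u : Fin n → F) (b : (Fin n → F) × Matrix (Fin n) (Fin n) F) :
    rsMul F n (u, 0) b = (u ᵥ* b.2, 0) := by
  simp [rsMul]

@[simp]
lemma rsMul_mat_mat (M N : Matrix (Fin n) (Fin n) F) :
    rsMul F n (0, M) (0, N) = (0, M * N) := by
  simp [rsMul]

@[simp]
lemma rsMul_mat_vec (M : Matrix (Fin n) (Fin n) F) (u : Fin n → F) :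
    rsMul F n (0, M) (u, 0) = (u ᵥ* M, M * diagonal u - diagonal u * M) := by
  simp [rsMul]

lemma exists_vecMul_eq {w : Fin n → F} (hw : w ≠ 0) (u : Fin n → F) :
    ∃ M : Matrix (Fin n) (Fin n) F, w ᵥ* M = u := by
  obtain ⟨i, hi⟩ := Function.ne_iff.mp hw
  refine ⟨vecMulVec (Pi.single i (w i)⁻¹) u, ?_⟩
  rw [vecMul_vecMulVec, dotProduct_single, mul_inv_cancel₀ hi, one_smul]

lemma single_mul_diagonal_sub_diagonal_mul_single {j k : Fin n} (hjk : j ≠ k) :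
    single j k (1 : F) * diagonal (Pi.single k 1) - diagonal (Pi.single k 1) * single j k 1
      = single j k 1 := by
  rw [diagonal_single, single_mul_single_same, single_mul_single_of_ne (h := hjk.symm),
    mul_one, sub_zero]

variable {I : Submodule F ((Fin n → F) × Matrix (Fin n) (Fin n) F)}

lemma exists_vec_mem (hleft : ∀ a, ∀ b ∈ I, rsMul F n a b ∈ I) (hI : I ≠ ⊥) :
    ∃ w : Fin n → F, w ≠ 0 ∧ (w, 0) ∈ I := by
  obtain ⟨⟨v, A⟩, hmem, hne⟩ := (Submodule.ne_bot_iff I).mp hI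
  by_cases hA : A = 0
  · subst hA
    exact ⟨v, fun hv => hne (by simp [hv]), hmem⟩
  · obtain ⟨i, hi⟩ := Function.ne_iff.mp hA
    refine ⟨A i, hi, ?_⟩
    simpa [single_one_vecMul, row] using hleft (Pi.single i 1, 0) _ hmem

lemma vec_mem_of_vec_mem (hright : ∀ a, ∀ b ∈ I, rsMul F n b a ∈ I) {w : Fin n → F}
    (hw : w ≠ 0) (hwI : (w, 0) ∈ I) (u : Fin n → F) : (u, 0) ∈ I := by
  obtain ⟨M, rfl⟩ := exists_vecMul_eq hw u
  simpa using hright (0, M) _ hwI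

lemma mat_commutator_diagonal_mem (hleft : ∀ a, ∀ b ∈ I, rsMul F n a b ∈ I)
    (hvec : ∀ u : Fin n → F, (u, 0) ∈ I) (M : Matrix (Fin n) (Fin n) F) (u : Fin n → F) :
    (0, M * diagonal u - diagonal u * M) ∈ I := by
  simpa using I.sub_mem (hleft (0, M) _ (hvec u)) (hvec (u ᵥ* M))

def matrixPart (hleft : ∀ a, ∀ b ∈ I, rsMul F n a b ∈ I)
    (hright : ∀ a, ∀ b ∈ I, rsMul F n b a ∈ I) : TwoSidedIdeal (Matrix (Fin n) (Fin n) F) :=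
  .mk' {M | (0, M) ∈ I} I.zero_mem
    (fun hM hN => by simpa using I.add_mem hM hN)
    (fun hM => by simpa using I.neg_mem hM)
    (fun {M _} hN => by simpa using hleft (0, M) _ hN)
    (fun {_ N} hM => by simpa using hright (0, N) _ hM)

@[simp]
lemma mem_matrixPart (hleft : ∀ a, ∀ b ∈ I, rsMul F n a b ∈ I)
    (hright : ∀ a, ∀ b ∈ I, rsMul F n b a ∈ I) (M : Matrix (Fin n) (Fin n) F) :
    M ∈ matrixPart hleft hright ↔ (0, M) ∈ I :=
  TwoSidedIdeal.mem_mk' ..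

lemma mat_mem (hn : 1 < n) (hleft : ∀ a, ∀ b ∈ I, rsMul F n a b ∈ I)
    (hright : ∀ a, ∀ b ∈ I, rsMul F n b a ∈ I) (hvec : ∀ u : Fin n → F, (u, 0) ∈ I)
    (M : Matrix (Fin n) (Fin n) F) : (0, M) ∈ I := by
  have : Nontrivial (Fin n) := Fin.nontrivial_iff_two_le.mpr hn
  obtain ⟨j, k, hjk⟩ := exists_pair_ne (Fin n)
  have hunit : single j k (1 : F) ∈ matrixPart hleft hright := by
    rw [mem_matrixPart, ← single_mul_diagonal_sub_diagonal_mul_single hjk]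
    exact mat_commutator_diagonal_mem hleft hvec _ _
  have hunit_ne : single j k (1 : F) ≠ 0 := fun h => one_ne_zero (α := F) (by
    simpa using congrFun (congrFun h j) k)
  have htop : matrixPart hleft hright = ⊤ :=
    TwoSidedIdeal.one_mem_iff _ |>.mp <| IsSimpleRing.one_mem_of_ne_zero_mem _ hunit_ne hunit
  rw [← mem_matrixPart hleft hright, htop]
  trivial

end RSAlgebra

open RSAlgebra in
/-- For `n > 1`, the matrix RS-algebra is simple: every two-sided ideal
(an `F`-subspace closed under multiplication by arbitrary elements on both
sides) is `0` or the whole algebra. -/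
theorem matrixRS_simple (F : Type*) [Field F] (n : ℕ) (hn : 1 < n)
    (I : Submodule F ((Fin n → F) × Matrix (Fin n) (Fin n) F))
    (hleft : ∀ a, ∀ b ∈ I, rsMul F n a b ∈ I)
    (hright : ∀ a, ∀ b ∈ I, rsMul F n b a ∈ I) :
    I = ⊥ ∨ I = ⊤ := by
  refine or_iff_not_imp_left.mpr fun hI => ?_
  obtain ⟨w, hw, hwI⟩ := exists_vec_mem hleft hI
  have hvec := vec_mem_of_vec_mem hright hw hwI
  refine eq_top_iff.mpr fun ⟨v, M⟩ _ => ?_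
  simpa using I.add_mem (hvec v) (mat_mem hn hleft hright hvec M)
end

section
/- The superalgebra B_{n|n} = F^n ⊕ [F^n] is a right-alternative superalgebra: for all homogeneous x, y, z, (x,y,z) + (−1)^{|y||z|}(x,z,y) = 0. -/
/-!
The associator of `B_{n|n}` has the closed form
`(x, y, z) = (x₂ (y₂ (z₁ - τ z₁) - z₂ (y₁ - τ y₁)), [x₂ (y₂ z₂ - τ (y₂ z₂))])`,
because `τ` is a ring automorphism of `F^n`. Its even part is antisymmetric and its odd part
symmetric in `y, z`. So `(x, y, z) + (x, z, y)` is a multiple of `y₂ z₂`, which vanishes when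
`y` or `z` is even, and `(x, y, z) - (x, z, y)` only involves `y₁, z₁`, which vanish when `y` and
`z` are odd.
-/

/-- Cyclic shift `τ(a_1,…,a_n) = (a_2,…,a_n,a_1)`. -/
def cyc {F : Type*} {n : ℕ} (a : Fin n → F) : Fin n → F := fun i => a (finRotate n i)

/-- The superalgebra `B_{n|n} = F^n ⊕ [F^n]`, with
`x·y = xy`, `[x]·[y] = xy`, `x·[y] = [xy]`, `[x]·y = [x τ(y)]`. -/
def bnnMul (F : Type*) [Field F] (n : ℕ) :
    ((Fin n → F) × (Fin n → F)) → ((Fin n → F) × (Fin n → F)) →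
    ((Fin n → F) × (Fin n → F)) :=
  fun a b => (a.1 * b.1 + a.2 * b.2, a.1 * b.2 + a.2 * cyc b.1)

def bnnEven (F : Type*) [Field F] (n : ℕ) : Set ((Fin n → F) × (Fin n → F)) :=
  {a | a.2 = 0}

def bnnOdd (F : Type*) [Field F] (n : ℕ) : Set ((Fin n → F) × (Fin n → F)) :=
  {a | a.1 = 0}

def bnnAssoc (F : Type*) [Field F] (n : ℕ)
    (x y z : (Fin n → F) × (Fin n → F)) : (Fin n → F) × (Fin n → F) :=
  bnnMul F n (bnnMul F n x y) z - bnnMul F n x (bnnMul F n y z)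

theorem cyc_zero {F : Type*} [Zero F] {n : ℕ} : cyc (0 : Fin n → F) = 0 :=
  rfl

section

variable {F : Type*} [Field F] {n : ℕ}

theorem bnnAssoc_eq (x y z : (Fin n → F) × (Fin n → F)) :
    bnnAssoc F n x y z =
      (x.2 * (y.2 * (z.1 - cyc z.1) - z.2 * (y.1 - cyc y.1)),
        x.2 * (y.2 * z.2 - cyc (y.2 * z.2))) := by
  ext i <;> simp only [bnnAssoc, bnnMul, cyc, Prod.fst_sub, Prod.snd_sub, Pi.add_apply,
    Pi.mul_apply, Pi.sub_apply] <;> ring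

theorem bnnAssoc_add_bnnAssoc_swap (x y z : (Fin n → F) × (Fin n → F)) :
    bnnAssoc F n x y z + bnnAssoc F n x z y = (0, 2 * (x.2 * (y.2 * z.2 - cyc (y.2 * z.2)))) := by
  rw [bnnAssoc_eq, bnnAssoc_eq, mul_comm z.2 y.2]
  refine Prod.ext ?_ ?_ <;> simp only [Prod.fst_add, Prod.snd_add] <;> ring

theorem bnnAssoc_sub_bnnAssoc_swap (x y z : (Fin n → F) × (Fin n → F)) :
    bnnAssoc F n x y z - bnnAssoc F n x z y =
      (2 * (x.2 * (y.2 * (z.1 - cyc z.1) - z.2 * (y.1 - cyc y.1))), 0) := by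
  rw [bnnAssoc_eq, bnnAssoc_eq, mul_comm z.2 y.2]
  refine Prod.ext ?_ ?_ <;> simp only [Prod.fst_sub, Prod.snd_sub] <;> ring

end

/-- `B_{n|n}` is a right-alternative superalgebra: for homogeneous `x,y,z`,
`(x,y,z) + (−1)^{|y||z|}(x,z,y) = 0`. -/
theorem bnn_right_alternative (F : Type*) [Field F] (n : ℕ) :
    ∀ x y z : (Fin n → F) × (Fin n → F),
      x ∈ bnnEven F n ∪ bnnOdd F n →
      y ∈ bnnEven F n ∪ bnnOdd F n →
      z ∈ bnnEven F n ∪ bnnOdd F n →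
      ((y ∈ bnnOdd F n → z ∈ bnnOdd F n →
          bnnAssoc F n x y z - bnnAssoc F n x z y = 0) ∧
       ((y ∈ bnnEven F n ∨ z ∈ bnnEven F n) →
          bnnAssoc F n x y z + bnnAssoc F n x z y = 0)) := by
  intro x y z _ _ _
  refine ⟨fun (hy : y.1 = 0) (hz : z.1 = 0) => ?_, fun hyz => ?_⟩
  · rw [bnnAssoc_sub_bnnAssoc_swap, hy, hz, cyc_zero]
    simp
  · have hprod : y.2 * z.2 = 0 := by
      rcases hyz with (hy : y.2 = 0) | (hz : z.2 = 0)
      · rw [hy, zero_mul]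
      · rw [hz, mul_zero]
    rw [bnnAssoc_add_bnnAssoc_swap, hprod, cyc_zero]
    simp
end

section
/- For n > 1, the superalgebra B_{n|n} is a simple superalgebra: it has no nonzero proper graded two-sided ideals. -/
open Fin.NatCast in
theorem Fin.forall_of_finRotate_symm_closed {n : ℕ} {P : Fin n → Prop}
    (hP : ∀ i, P i → P ((finRotate n).symm i)) {i : Fin n} (hi : P i) (j : Fin n) : P j := by
  have := i.neZero
  have hsub : ∀ k : ℕ, P (i - (k : Fin n)) := by
    intro k
    induction k with
    | zero => simpa using hi
    | succ k ih => simpa [finRotate_symm_apply, sub_sub] using hP _ ih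
  simpa using hsub (i - j).val

section

variable {F : Type*} [Field F] {n : ℕ}

theorem cyc_one : cyc (1 : Fin n → F) = 1 := rfl

theorem bnnMul_one_right (a : (Fin n → F) × (Fin n → F)) : bnnMul F n a (1, 0) = a := by
  simp [bnnMul, cyc_one]

theorem bnnMul_single_left (i : Fin n) (c d : F) (b : (Fin n → F) × (Fin n → F)) :
    bnnMul F n (Pi.single i c, Pi.single i d) b =
      (Pi.single i (c * b.1 i + d * b.2 i),
        Pi.single i (c * b.2 i + d * b.1 (finRotate n i))) := by
  change _ = ((_ : Fin n → F), (Pi.single i (c * b.2 i + d * cyc b.1 i) : Fin n → F))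
  simp only [bnnMul, Pi.single_add, Pi.single_mul_left]

variable {I : Submodule F ((Fin n → F) × (Fin n → F))}

theorem single_fst_mem_of_fst_mem (hleft : ∀ a, ∀ b ∈ I, bnnMul F n a b ∈ I)
    {v : Fin n → F} (hv : (v, 0) ∈ I) {i : Fin n} (hi : v i ≠ 0) :
    (Pi.single i 1, 0) ∈ I := by
  have h := hleft (Pi.single i (v i)⁻¹, Pi.single i 0) _ hv
  rw [bnnMul_single_left] at h
  simpa [hi] using h

theorem single_fst_mem_of_snd_mem (hleft : ∀ a, ∀ b ∈ I, bnnMul F n a b ∈ I)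
    {w : Fin n → F} (hw : (0, w) ∈ I) {i : Fin n} (hi : w i ≠ 0) :
    (Pi.single i 1, 0) ∈ I := by
  have h := hleft (Pi.single i 0, Pi.single i (w i)⁻¹) _ hw
  rw [bnnMul_single_left] at h
  simpa [hi] using h

theorem single_fst_mem_finRotate_symm (hleft : ∀ a, ∀ b ∈ I, bnnMul F n a b ∈ I)
    {i : Fin n} (hi : (Pi.single i 1, 0) ∈ I) :
    (Pi.single ((finRotate n).symm i) 1, 0) ∈ I := by
  have hodd : (0, Pi.single ((finRotate n).symm i) 1) ∈ I := by
    have h := hleft (Pi.single ((finRotate n).symm i) 0, Pi.single ((finRotate n).symm i) 1) _ hi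
    rw [bnnMul_single_left] at h
    simpa only [Equiv.apply_symm_apply, Pi.single_eq_same, Pi.single_zero, zero_mul, mul_zero,
      one_mul, zero_add, add_zero, Pi.zero_apply] using h
  exact single_fst_mem_of_snd_mem hleft hodd (by simp)

theorem exists_single_fst_mem (hleft : ∀ a, ∀ b ∈ I, bnnMul F n a b ∈ I)
    (hgraded : ∀ b ∈ I, (b.1, 0) ∈ I ∧ (0, b.2) ∈ I) (hI : I ≠ ⊥) :
    ∃ i, (Pi.single i 1, 0) ∈ I := by
  obtain ⟨x, hxI, hx0⟩ := Submodule.exists_mem_ne_zero_of_ne_bot hI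
  obtain ⟨hx1, hx2⟩ := hgraded x hxI
  by_cases h : x.1 = 0
  · obtain ⟨i, hi⟩ := Function.ne_iff.mp fun h2 => hx0 (Prod.ext h h2)
    exact ⟨i, single_fst_mem_of_snd_mem hleft hx2 hi⟩
  · obtain ⟨i, hi⟩ := Function.ne_iff.mp h
    exact ⟨i, single_fst_mem_of_fst_mem hleft hx1 hi⟩

theorem eq_top_of_forall_single_fst_mem (hleft : ∀ a, ∀ b ∈ I, bnnMul F n a b ∈ I)
    (hall : ∀ j, (Pi.single j 1, 0) ∈ I) : I = ⊤ := by
  have hsum : ((1 : Fin n → F), (0 : Fin n → F)) = ∑ j, (Pi.single j 1, 0) := by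
    rw [← prod_mk_sum, Finset.univ_sum_single, Finset.sum_const_zero]
    rfl
  have hone : ((1 : Fin n → F), (0 : Fin n → F)) ∈ I := hsum ▸ I.sum_mem fun j _ => hall j
  exact Submodule.eq_top_iff'.mpr fun p => bnnMul_one_right p ▸ hleft p _ hone

end

theorem bnn_simple_general (F : Type*) [Field F] (n : ℕ)
    (I : Submodule F ((Fin n → F) × (Fin n → F)))
    (hleft : ∀ a, ∀ b ∈ I, bnnMul F n a b ∈ I)
    (hgraded : ∀ b ∈ I, ((b.1, 0) : (Fin n → F) × (Fin n → F)) ∈ I ∧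
      ((0, b.2) : (Fin n → F) × (Fin n → F)) ∈ I) :
    I = ⊥ ∨ I = ⊤ := by
  refine or_iff_not_imp_left.mpr fun hI => ?_
  obtain ⟨i, hi⟩ := exists_single_fst_mem hleft hgraded hI
  exact eq_top_of_forall_single_fst_mem hleft
    (Fin.forall_of_finRotate_symm_closed (fun _ => single_fst_mem_finRotate_symm hleft) hi)

/-- For `n > 1`, the superalgebra `B_{n|n}` is simple: any graded two-sided
ideal (an `F`-subspace closed under multiplication by arbitrary elements and
under the projections onto the even and odd parts) is `0` or everything. -/
theorem bnn_simple (F : Type*) [Field F] (n : ℕ) (hn : 1 < n)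
    (I : Submodule F ((Fin n → F) × (Fin n → F)))
    (hleft : ∀ a, ∀ b ∈ I, bnnMul F n a b ∈ I)
    (hright : ∀ a, ∀ b ∈ I, bnnMul F n b a ∈ I)
    (hgraded : ∀ b ∈ I, ((b.1, 0) : (Fin n → F) × (Fin n → F)) ∈ I ∧
      ((0, b.2) : (Fin n → F) × (Fin n → F)) ∈ I) :
    I = ⊥ ∨ I = ⊤ :=
  bnn_simple_general F n I hleft hgraded
end

section
/- For every ν ∈ F, the superalgebra B_{2|2}(ν) = F^2 ⊕ [F^2] is a right-alternative superalgebra: for all homogeneous x,y,z, (x,y,z) + (−1)^{|y||z|}(x,z,y) = 0. -/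
/-- The swap `(a₁,a₂)* = (a₂,a₁)`. -/
def swp {F : Type*} (a : F × F) : F × F := (a.2, a.1)

/-- `χ(a₁,a₂) = (a₁+a₂, a₁+ν a₂)`. -/
def chi {F : Type*} [Field F] (ν : F) (a : F × F) : F × F :=
  (a.1 + a.2, a.1 + ν * a.2)

/-- The superalgebra `B_{2|2}(ν) = F² ⊕ [F²]`, with `x·y = xy`,
`[x]·[y] = x·χ(y)`, `x·[y] = [xy]`, `[x]·y = [x·y*]`. -/
def b22Mul (F : Type*) [Field F] (ν : F) :
    ((F × F) × (F × F)) → ((F × F) × (F × F)) → ((F × F) × (F × F)) :=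
  fun a b => (a.1 * b.1 + a.2 * chi ν b.2, a.1 * b.2 + a.2 * swp b.1)

/-- Even elements of `B_{2|2}(ν)`. -/
def b22Even (F : Type*) [Field F] : Set ((F × F) × (F × F)) := {a | a.2 = 0}

/-- Odd elements of `B_{2|2}(ν)`. -/
def b22Odd (F : Type*) [Field F] : Set ((F × F) × (F × F)) := {a | a.1 = 0}

/-- The associator in `B_{2|2}(ν)`. -/
def b22Assoc (F : Type*) [Field F] (ν : F) (x y z : (F × F) × (F × F)) :
    (F × F) × (F × F) :=
  b22Mul F ν (b22Mul F ν x y) z - b22Mul F ν x (b22Mul F ν y z)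

section

variable {F : Type*} [Field F] (ν : F)

theorem b22Assoc_add_b22Assoc_swap_of_mem_even {y : (F × F) × (F × F)} (hy : y ∈ b22Even F)
    (x z : (F × F) × (F × F)) : b22Assoc F ν x y z + b22Assoc F ν x z y = 0 := by
  obtain ⟨y₀, y₁⟩ := y
  obtain rfl : y₁ = 0 := hy
  ext <;> simp only [b22Assoc, b22Mul, chi, swp, Prod.fst_add, Prod.snd_add, Prod.fst_sub,
    Prod.snd_sub, Prod.fst_mul, Prod.snd_mul, Prod.fst_zero, Prod.snd_zero, Prod.mk_add_mk,
    Prod.mk_sub_mk] <;> ring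

theorem b22Assoc_swap_of_mem_odd {y z : (F × F) × (F × F)} (hy : y ∈ b22Odd F)
    (hz : z ∈ b22Odd F) (x : (F × F) × (F × F)) : b22Assoc F ν x y z = b22Assoc F ν x z y := by
  obtain ⟨y₀, y₁⟩ := y
  obtain ⟨z₀, z₁⟩ := z
  obtain rfl : y₀ = 0 := hy
  obtain rfl : z₀ = 0 := hz
  ext <;> simp only [b22Assoc, b22Mul, chi, swp, Prod.fst_add, Prod.snd_add, Prod.fst_sub,
    Prod.snd_sub, Prod.fst_mul, Prod.snd_mul, Prod.fst_zero, Prod.snd_zero, Prod.mk_sub_mk] <;> ring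

end

/-- `B_{2|2}(ν)` is a right-alternative superalgebra: for homogeneous
`x,y,z`, `(x,y,z) + (−1)^{|y||z|}(x,z,y) = 0`. -/
theorem b22_right_alternative (F : Type*) [Field F] (ν : F) :
    ∀ x y z : (F × F) × (F × F),
      x ∈ b22Even F ∪ b22Odd F →
      y ∈ b22Even F ∪ b22Odd F →
      z ∈ b22Even F ∪ b22Odd F →
      ((y ∈ b22Odd F → z ∈ b22Odd F →
          b22Assoc F ν x y z - b22Assoc F ν x z y = 0) ∧
       ((y ∈ b22Even F ∨ z ∈ b22Even F) →
          b22Assoc F ν x y z + b22Assoc F ν x z y = 0)) := by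
  intro x y z _ _ _
  refine ⟨fun hy hz => sub_eq_zero.2 (b22Assoc_swap_of_mem_odd ν hy hz x), ?_⟩
  rintro (hy | hz)
  · exact b22Assoc_add_b22Assoc_swap_of_mem_even ν hy x z
  · rw [add_comm]
    exact b22Assoc_add_b22Assoc_swap_of_mem_even ν hz x y
end

section
/- The superalgebra B_{2|2}(ν) is a simple superalgebra for every ν ∈ F: it has no nonzero proper graded two-sided ideals. -/
namespace B22

variable {F : Type*} [Field F]

-- `o₁`, `o₂` are the odd basis vectors `[e₁]`, `[e₂]`.
def e₁ : (F × F) × (F × F) := ((1, 0), 0)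
def e₂ : (F × F) × (F × F) := ((0, 1), 0)
def o₁ : (F × F) × (F × F) := (0, (1, 0))
def o₂ : (F × F) × (F × F) := (0, (0, 1))

section MulTable

variable (ν : F)

theorem b22Mul_one_left (a : (F × F) × (F × F)) : b22Mul F ν (1, 0) a = a := by
  simp [b22Mul]

theorem b22Mul_e₁_o₁ : b22Mul F ν e₁ o₁ = o₁ := by
  simp [b22Mul, swp, e₁, o₁]

theorem b22Mul_o₁_o₁ : b22Mul F ν o₁ o₁ = e₁ := by
  simp [b22Mul, swp, chi, e₁, o₁]

theorem b22Mul_o₂_o₁ : b22Mul F ν o₂ o₁ = e₂ := by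
  simp [b22Mul, swp, chi, e₂, o₁, o₂]

theorem b22Mul_e₂_o₂ : b22Mul F ν e₂ o₂ = o₂ := by
  simp [b22Mul, swp, e₂, o₂]

theorem b22Mul_o₁_o₂ : b22Mul F ν o₁ o₂ = e₁ := by
  simp [b22Mul, swp, chi, e₁, o₁, o₂]

theorem b22Mul_e₁_mul_e₁ (v : (F × F) × (F × F)) :
    b22Mul F ν (b22Mul F ν e₁ v) e₁ = v.1.1 • e₁ := by
  simp [b22Mul, chi, swp, e₁, Prod.ext_iff]

theorem b22Mul_e₂_mul_e₂ (v : (F × F) × (F × F)) :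
    b22Mul F ν (b22Mul F ν e₂ v) e₂ = v.1.2 • e₂ := by
  simp [b22Mul, chi, swp, e₂, Prod.ext_iff]

theorem b22Mul_e₁_mul_e₂ (v : (F × F) × (F × F)) :
    b22Mul F ν (b22Mul F ν e₁ v) e₂ = v.2.1 • o₁ := by
  simp [b22Mul, chi, swp, e₁, e₂, o₁, Prod.ext_iff]

theorem b22Mul_e₂_mul_e₁ (v : (F × F) × (F × F)) :
    b22Mul F ν (b22Mul F ν e₂ v) e₁ = v.2.2 • o₂ := by
  simp [b22Mul, chi, swp, e₁, e₂, o₂, Prod.ext_iff]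

end MulTable

section Ideal

variable {ν : F} {I : Submodule F ((F × F) × (F × F))}

theorem eq_top_of_e₁_mem_of_e₂_mem (hright : ∀ a, ∀ b ∈ I, b22Mul F ν b a ∈ I)
    (h₁ : e₁ ∈ I) (h₂ : e₂ ∈ I) : I = ⊤ := by
  have hone : ((1, 0) : (F × F) × (F × F)) ∈ I := by
    have : (e₁ + e₂ : (F × F) × (F × F)) = (1, 0) := by
      simp [e₁, e₂, Prod.ext_iff]
    exact this ▸ add_mem h₁ h₂
  refine Submodule.eq_top_iff'.2 fun a => ?_
  simpa only [b22Mul_one_left] using hright a _ hone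

variable (hleft : ∀ a, ∀ b ∈ I, b22Mul F ν a b ∈ I)
  (hright : ∀ a, ∀ b ∈ I, b22Mul F ν b a ∈ I)
include hleft hright

theorem eq_top_of_o₁_mem (h : o₁ ∈ I) : I = ⊤ :=
  eq_top_of_e₁_mem_of_e₂_mem hright
    (b22Mul_o₁_o₁ ν ▸ hleft o₁ o₁ h) (b22Mul_o₂_o₁ ν ▸ hleft o₂ o₁ h)

theorem eq_top_of_e₁_mem (h : e₁ ∈ I) : I = ⊤ :=
  eq_top_of_o₁_mem hleft hright (b22Mul_e₁_o₁ ν ▸ hright o₁ e₁ h)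

theorem eq_top_of_o₂_mem (h : o₂ ∈ I) : I = ⊤ :=
  eq_top_of_e₁_mem hleft hright (b22Mul_o₁_o₂ ν ▸ hleft o₁ o₂ h)

theorem eq_top_of_e₂_mem (h : e₂ ∈ I) : I = ⊤ :=
  eq_top_of_o₂_mem hleft hright (b22Mul_e₂_o₂ ν ▸ hright o₂ e₂ h)

theorem eq_top_of_mem_of_ne_zero {v : (F × F) × (F × F)} (hv : v ∈ I) (hv₀ : v ≠ 0) :
    I = ⊤ := by
  have sandwich : ∀ a b, b22Mul F ν (b22Mul F ν a v) b ∈ I :=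
    fun a b => hright b _ (hleft a v hv)
  rcases ne_or_eq v.1.1 0 with h | h₁
  · exact eq_top_of_e₁_mem hleft hright
      ((I.smul_mem_iff h).1 (b22Mul_e₁_mul_e₁ ν v ▸ sandwich e₁ e₁))
  rcases ne_or_eq v.1.2 0 with h | h₂
  · exact eq_top_of_e₂_mem hleft hright
      ((I.smul_mem_iff h).1 (b22Mul_e₂_mul_e₂ ν v ▸ sandwich e₂ e₂))
  rcases ne_or_eq v.2.1 0 with h | h₃
  · exact eq_top_of_o₁_mem hleft hright
      ((I.smul_mem_iff h).1 (b22Mul_e₁_mul_e₂ ν v ▸ sandwich e₁ e₂))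
  rcases ne_or_eq v.2.2 0 with h | h₄
  · exact eq_top_of_o₂_mem hleft hright
      ((I.smul_mem_iff h).1 (b22Mul_e₂_mul_e₁ ν v ▸ sandwich e₂ e₁))
  exact absurd (Prod.ext (Prod.ext h₁ h₂) (Prod.ext h₃ h₄)) hv₀

end Ideal

end B22

theorem b22_simple_general (F : Type*) [Field F] (ν : F)
    (I : Submodule F ((F × F) × (F × F)))
    (hleft : ∀ a, ∀ b ∈ I, b22Mul F ν a b ∈ I)
    (hright : ∀ a, ∀ b ∈ I, b22Mul F ν b a ∈ I) :
    I = ⊥ ∨ I = ⊤ := by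
  refine or_iff_not_imp_left.2 fun hI => ?_
  obtain ⟨v, hv, hv₀⟩ := Submodule.exists_mem_ne_zero_of_ne_bot hI
  exact B22.eq_top_of_mem_of_ne_zero hleft hright hv hv₀

/-- For every `ν ∈ F`, the superalgebra `B_{2|2}(ν)` is simple: any graded
two-sided ideal is `0` or everything. -/
theorem b22_simple (F : Type*) [Field F] (ν : F)
    (I : Submodule F ((F × F) × (F × F)))
    (hleft : ∀ a, ∀ b ∈ I, b22Mul F ν a b ∈ I)
    (hright : ∀ a, ∀ b ∈ I, b22Mul F ν b a ∈ I)
    (hgraded : ∀ b ∈ I, ((b.1, 0) : (F × F) × (F × F)) ∈ I ∧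
      ((0, b.2) : (F × F) × (F × F)) ∈ I) :
    I = ⊥ ∨ I = ⊤ :=
  b22_simple_general F ν I hleft hright
end

section
/- Let w ∈ M_2(F) have nonzero trace. Then B_{4|4}(w) is a simple superalgebra: it has no nonzero proper graded two-sided ideals. -/
/-!
The even product of `B_{4|4}(w)` is matrix multiplication, so the even part `{x | (x, 0) ∈ I}` of a
graded ideal `I` is a two-sided ideal of the simple ring `M₂(F)`. A nonzero odd element `[y] ∈ I`
gives the nonzero even element `[y]·[w] = y` because `tr w ≠ 0`. Hence a nonzero graded ideal
contains `(1, 0)`, which is a right identity of `B_{4|4}(w)` since `1̄ = 1`.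
-/

/-- The symplectic involution on `M₂(F)`: `ȳ = tr(y)·1 − y`. -/
def symp {F : Type*} [Field F] (y : Matrix (Fin 2) (Fin 2) F) :
    Matrix (Fin 2) (Fin 2) F :=
  Matrix.trace y • (1 : Matrix (Fin 2) (Fin 2) F) - y

/-- The superalgebra `B_{4|4}(w) = M₂(F) ⊕ [M₂(F)]`, with `x·y = xy`,
`[x]·[y] = (tr y / tr w)·x`, `[x]·y = [x·ȳ]`, and
`x·[y] = [xy − ([x][y])^D]` where `a^D = aw − wa`. -/
def b44Mul (F : Type*) [Field F] (w : Matrix (Fin 2) (Fin 2) F) :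
    (Matrix (Fin 2) (Fin 2) F × Matrix (Fin 2) (Fin 2) F) →
    (Matrix (Fin 2) (Fin 2) F × Matrix (Fin 2) (Fin 2) F) →
    (Matrix (Fin 2) (Fin 2) F × Matrix (Fin 2) (Fin 2) F) :=
  fun a b =>
    (a.1 * b.1 + (Matrix.trace b.2 / Matrix.trace w) • a.2,
     (a.1 * b.2 - (Matrix.trace b.2 / Matrix.trace w) • (a.1 * w - w * a.1))
       + a.2 * symp b.1)

section B44

variable {F : Type*} [Field F]

@[simp]
lemma symp_one : symp (1 : Matrix (Fin 2) (Fin 2) F) = 1 := by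
  simp [symp, two_smul]

@[simp]
lemma b44Mul_even_even (w a b : Matrix (Fin 2) (Fin 2) F) :
    b44Mul F w (a, 0) (b, 0) = (a * b, 0) := by
  simp [b44Mul]

lemma b44Mul_odd_odd_w {w : Matrix (Fin 2) (Fin 2) F} (hw : w.trace ≠ 0)
    (y : Matrix (Fin 2) (Fin 2) F) :
    b44Mul F w (0, y) (0, w) = (y, 0) := by
  simp [b44Mul, symp, hw]

@[simp]
lemma b44Mul_one_right (w a b : Matrix (Fin 2) (Fin 2) F) :
    b44Mul F w (a, b) (1, 0) = (a, b) := by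
  simp [b44Mul]

variable {w : Matrix (Fin 2) (Fin 2) F}
  {I : Submodule F (Matrix (Fin 2) (Fin 2) F × Matrix (Fin 2) (Fin 2) F)}

lemma exists_even_mem_of_ne_bot (hw : w.trace ≠ 0)
    (hright : ∀ a, ∀ b ∈ I, b44Mul F w b a ∈ I)
    (hodd : ∀ b ∈ I, ((0, b.2) : Matrix (Fin 2) (Fin 2) F × Matrix (Fin 2) (Fin 2) F) ∈ I)
    (hI : I ≠ ⊥) :
    ∃ x : Matrix (Fin 2) (Fin 2) F, x ≠ 0 ∧ (x, 0) ∈ I := by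
  obtain ⟨⟨x, y⟩, hxyI, hxy⟩ := (Submodule.ne_bot_iff I).mp hI
  have hyI : ((0, y) : Matrix (Fin 2) (Fin 2) F × Matrix (Fin 2) (Fin 2) F) ∈ I := hodd _ hxyI
  by_cases hx : x = 0
  · subst hx
    refine ⟨y, fun hy => hxy (by rw [hy]; rfl), ?_⟩
    simpa only [b44Mul_odd_odd_w hw] using hright (0, w) _ hyI
  · exact ⟨x, hx, by simpa using I.sub_mem hxyI hyI⟩

lemma one_even_mem_of_even_mem (hleft : ∀ a, ∀ b ∈ I, b44Mul F w a b ∈ I)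
    (hright : ∀ a, ∀ b ∈ I, b44Mul F w b a ∈ I) {x : Matrix (Fin 2) (Fin 2) F} (hx : x ≠ 0)
    (hxI : (x, 0) ∈ I) :
    ((1 : Matrix (Fin 2) (Fin 2) F), (0 : Matrix (Fin 2) (Fin 2) F)) ∈ I := by
  let evenPart : TwoSidedIdeal (Matrix (Fin 2) (Fin 2) F) := .mk' {x | (x, 0) ∈ I}
    I.zero_mem
    (fun hx hy => by simpa using I.add_mem hx hy)
    (fun hx => by simpa using I.neg_mem hx)
    (fun {a _} hy => by simpa using hleft (a, 0) _ hy)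
    (fun {_ b} hx => by simpa using hright (b, 0) _ hx)
  simpa [evenPart] using
    IsSimpleRing.one_mem_of_ne_zero_mem evenPart hx (by simpa [evenPart] using hxI)

end B44

theorem b44_simple_general (F : Type*) [Field F]
    (w : Matrix (Fin 2) (Fin 2) F) (hw : Matrix.trace w ≠ 0)
    (I : Submodule F (Matrix (Fin 2) (Fin 2) F × Matrix (Fin 2) (Fin 2) F))
    (hleft : ∀ a, ∀ b ∈ I, b44Mul F w a b ∈ I)
    (hright : ∀ a, ∀ b ∈ I, b44Mul F w b a ∈ I)
    (hgraded : ∀ b ∈ I, ((b.1, 0) : Matrix (Fin 2) (Fin 2) F × Matrix (Fin 2) (Fin 2) F) ∈ I ∧ ((0, b.2) : Matrix (Fin 2) (Fin 2) F × Matrix (Fin 2) (Fin 2) F) ∈ I) :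
    I = ⊥ ∨ I = ⊤ := by
  refine or_iff_not_imp_left.mpr fun hI => ?_
  obtain ⟨x, hx, hxI⟩ := exists_even_mem_of_ne_bot hw hright (fun b hb => (hgraded b hb).2) hI
  have hone := one_even_mem_of_even_mem hleft hright hx hxI
  refine Submodule.eq_top_iff'.mpr fun ⟨a, b⟩ => ?_
  simpa using hleft (a, b) _ hone

/-- For `w` with nonzero trace (char F ≠ 2), `B_{4|4}(w)` is a simple
superalgebra: any graded two-sided ideal is `0` or everything. -/
theorem b44_simple (F : Type*) [Field F] (hchar : (2 : F) ≠ 0)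
    (w : Matrix (Fin 2) (Fin 2) F) (hw : Matrix.trace w ≠ 0)
    (I : Submodule F (Matrix (Fin 2) (Fin 2) F × Matrix (Fin 2) (Fin 2) F))
    (hleft : ∀ a, ∀ b ∈ I, b44Mul F w a b ∈ I)
    (hright : ∀ a, ∀ b ∈ I, b44Mul F w b a ∈ I)
    (hgraded : ∀ b ∈ I, ((b.1, 0) : Matrix (Fin 2) (Fin 2) F × Matrix (Fin 2) (Fin 2) F) ∈ I ∧ ((0, b.2) : Matrix (Fin 2) (Fin 2) F × Matrix (Fin 2) (Fin 2) F) ∈ I) :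
    I = ⊥ ∨ I = ⊤ :=
  b44_simple_general F w hw I hleft hright hgraded
end

section
/- Let B be a right-alternative superalgebra that is a central order in B_{n|n}, with Z = Z(B)_0 the even part of the center. Then there exists nonzero z ∈ Z with z^{2n}·B contained in a finitely generated Z-submodule of B_{n|n}; consequently B embeds in a finitely generated Z-module. -/
/-- The even part of the center of a graded subring `B ⊆ B_{n|n}`: even
elements of `B` that commute and associate with everything in `B`. -/
def bnnCenter₀ (F : Type*) [Field F] (n : ℕ)
    (B : Set ((Fin n → F) × (Fin n → F))) : Set ((Fin n → F) × (Fin n → F)) :=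
  {z | z ∈ B ∧ z.2 = 0 ∧ (∀ x ∈ B, bnnMul F n z x = bnnMul F n x z) ∧
    ∀ x ∈ B, ∀ y ∈ B,
      bnnMul F n (bnnMul F n z x) y = bnnMul F n z (bnnMul F n x y) ∧
      bnnMul F n (bnnMul F n x z) y = bnnMul F n x (bnnMul F n z y) ∧
      bnnMul F n (bnnMul F n x y) z = bnnMul F n x (bnnMul F n y z)}

/-!
Localizing the odd element `[1]` gives a central `z = (u, 0)` with `[u] ∈ B`; since `z` commutes
with `[u]`, `u² = u τ(u)`, so `u` is a nonzero constant `λ`, `z = λ` and `θ = [λ] ∈ B`.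
Commuting with `θ` forces every central element to be a constant. For even `x`,
`θ·(θ·x) = λ² τ(x)` and `θ·θ = λ²`, so the even part of `B` is stable under `x ↦ λ² τ(x)` and
`x ↦ λ² x`; summing over the `n` rotations, `λ^{2n} (∑ᵢ xᵢ)·1` lies in `B`, hence in `Z`, for
every even `x ∈ B`. Localizing the idempotents `e_j` gives `r_j e_j ∈ B`; applying the above to
the even part of `(r_j e_j)·b` and to `θ` times its odd part writes `λ^{2n} b` as a
`Z`-combination of the `2n` elements `r_j⁻¹ e_j` and `[(λ r_j)⁻¹ e_j]`.
-/

open Function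

namespace Bnn

variable {F : Type*} {n : ℕ}

section Rotation

open Fin.NatCast

lemma iterate_finRotate_apply [NeZero n] (i : Fin n) (k : ℕ) : (finRotate n)^[k] i = i + k := by
  induction k with
  | zero => simp
  | succ k ih => rw [iterate_succ_apply', ih, finRotate_apply, Nat.cast_succ, add_assoc]

lemma finRotate_induction {P : Fin n → Prop} (i₀ : Fin n) (h₀ : P i₀)
    (step : ∀ i, P i → P (finRotate n i)) (i : Fin n) : P i := by
  have := i₀.neZero
  have hi : (finRotate n)^[(i - i₀).val] i₀ = i := by
    rw [iterate_finRotate_apply, Fin.cast_val_eq_self, add_sub_cancel]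
  rw [← hi]
  exact Iterate.rec P h₀ step _

lemma iterate_cyc_apply (x : Fin n → F) (k : ℕ) (i : Fin n) :
    cyc^[k] x i = x ((finRotate n)^[k] i) := by
  induction k generalizing x with
  | zero => rfl
  | succ k ih => rw [iterate_succ_apply, ih, iterate_succ_apply', cyc]

lemma sum_iterate_cyc [AddCommMonoid F] (x : Fin n → F) :
    ∑ k : Fin n, cyc^[k] x = const (Fin n) (∑ i, x i) := by
  ext i
  have := i.neZero
  simp only [Finset.sum_apply, iterate_cyc_apply, iterate_finRotate_apply, Fin.cast_val_eq_self,
    const_apply]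
  exact Fintype.sum_equiv (Equiv.addLeft i) _ _ fun _ => rfl

end Rotation

lemma eq_const_of_cyc_eq {x : Fin n → F} (h : cyc x = x) (i₀ : Fin n) : x = const (Fin n) (x i₀) :=
  funext (finRotate_induction (P := fun i => x i = x i₀) i₀ rfl fun i hi => (congrFun h i).trans hi)

@[simp] lemma cyc_const (c : F) : cyc (const (Fin n) c) = const (Fin n) c := rfl

@[simp] lemma cyc_zero [Zero F] : cyc (0 : Fin n → F) = 0 := rfl

@[simp] lemma cyc_smul {R : Type*} [SMul R F] (c : R) (x : Fin n → F) : cyc (c • x) = c • cyc x :=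
  rfl

variable [Field F]

local infixl:70 " ⋆ " => bnnMul _ _

def scalar (c : F) : (Fin n → F) × (Fin n → F) := (const _ c, 0)

lemma bnnMul_mk (a b c d : Fin n → F) : (a, b) ⋆ (c, d) = (a * c + b * d, a * d + b * cyc c) :=
  rfl

lemma const_mul_eq_smul (c : F) (x : Fin n → F) : const (Fin n) c * x = c • x := rfl

lemma smul_bnnMul (c : F) (x y : (Fin n → F) × (Fin n → F)) : (c • x) ⋆ y = c • (x ⋆ y) := by
  simp only [bnnMul, Prod.smul_fst, Prod.smul_snd, smul_mul_assoc, smul_add, Prod.smul_mk]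

lemma bnnMul_smul (c : F) (x y : (Fin n → F) × (Fin n → F)) : x ⋆ (c • y) = c • (x ⋆ y) := by
  simp only [bnnMul, Prod.smul_fst, Prod.smul_snd, mul_smul_comm, cyc_smul, smul_add, Prod.smul_mk]

@[simp] lemma scalar_bnnMul (c : F) (x : (Fin n → F) × (Fin n → F)) : scalar c ⋆ x = c • x := by
  ext i <;> simp [scalar, bnnMul, const_mul_eq_smul]

@[simp] lemma bnnMul_scalar (c : F) (x : (Fin n → F) × (Fin n → F)) : x ⋆ scalar c = c • x := by
  ext i <;> simp [scalar, bnnMul, mul_comm]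

lemma scalar_mem_bnnCenter₀ {B : Set ((Fin n → F) × (Fin n → F))} {c : F} (hc : scalar c ∈ B) :
    scalar c ∈ bnnCenter₀ F n B :=
  ⟨hc, rfl, fun _ _ => by simp, fun _ _ _ _ => by simp [smul_bnnMul, bnnMul_smul]⟩

lemma iterate_scalar_bnnMul (c : F) (k : ℕ) (x : (Fin n → F) × (Fin n → F)) :
    (fun y => scalar c ⋆ y)^[k] x = c ^ k • x := by
  induction k with
  | zero => simp
  | succ k ih => rw [iterate_succ_apply', ih, scalar_bnnMul, smul_smul, pow_succ']

def oddScalar (c : F) : (Fin n → F) × (Fin n → F) := (0, const _ c)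

@[simp] lemma oddScalar_bnnMul_even (c : F) (x : Fin n → F) :
    oddScalar c ⋆ (x, 0) = (0, c • cyc x) := by
  simp [oddScalar, bnnMul_mk, const_mul_eq_smul]

@[simp] lemma oddScalar_bnnMul_odd (c : F) (y : Fin n → F) : oddScalar c ⋆ (0, y) = (c • y, 0) := by
  simp [oddScalar, bnnMul_mk, const_mul_eq_smul]

lemma oddScalar_bnnMul_oddScalar (c d : F) :
    oddScalar (n := n) c ⋆ oddScalar d = scalar (c * d) := by
  ext i <;> simp [oddScalar, scalar, bnnMul_mk]

lemma single_bnnMul [DecidableEq (Fin n)] (j : Fin n) (r : F) (b : (Fin n → F) × (Fin n → F)) :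
    (Pi.single j r, 0) ⋆ b = (Pi.single j (r * b.1 j), Pi.single j (r * b.2 j)) := by
  ext i <;> by_cases h : i = j <;> simp [bnnMul, h]

lemma exists_const_of_mul_self_eq_mul_cyc {u : Fin n → F} (hu : u ≠ 0) (h : u * u = u * cyc u) :
    ∃ c ≠ 0, u = const (Fin n) c := by
  obtain ⟨i₀, hi₀⟩ := Function.ne_iff.mp hu
  refine ⟨u i₀, hi₀, funext (finRotate_induction (P := fun i => u i = u i₀) i₀ rfl fun i hi => ?_)⟩
  have hui : u i ≠ 0 := hi ▸ hi₀
  exact (mul_left_cancel₀ hui (congrFun h i)).symm.trans hi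

lemma exists_scalar_of_mem_bnnCenter₀ {B : Set ((Fin n → F) × (Fin n → F))}
    {z : (Fin n → F) × (Fin n → F)} (hz : z ∈ bnnCenter₀ F n B) (hz0 : z ≠ 0)
    (hzB : z ⋆ oddScalar 1 ∈ B) : ∃ c ≠ 0, z = scalar c ∧ oddScalar c ∈ B := by
  obtain ⟨u, v⟩ := z
  obtain rfl : v = 0 := hz.2.1
  have hzθ : (u, 0) ⋆ oddScalar 1 = (0, u) := by simp [oddScalar, bnnMul_mk]
  have hcomm := congrArg Prod.snd (hz.2.2.1 _ (hzθ ▸ hzB))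
  simp only [bnnMul_mk, zero_mul, mul_zero, add_zero, zero_add] at hcomm
  obtain ⟨c, hc, rfl⟩ := exists_const_of_mul_self_eq_mul_cyc (fun hu => hz0 (by simp [hu])) hcomm
  rw [hzθ] at hzB
  exact ⟨c, hc, rfl, hzB⟩

lemma eq_scalar_of_mem_bnnCenter₀ {B : Set ((Fin n → F) × (Fin n → F))} {c : F} (hc : c ≠ 0)
    (hθ : oddScalar c ∈ B) {z : (Fin n → F) × (Fin n → F)} (hz : z ∈ bnnCenter₀ F n B)
    (i₀ : Fin n) : z = scalar (z.1 i₀) := by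
  obtain ⟨u, v⟩ := z
  obtain rfl : v = 0 := hz.2.1
  have hcomm := congrArg Prod.snd (hz.2.2.1 _ hθ)
  simp only [oddScalar, bnnMul_mk, zero_mul, mul_zero, add_zero, zero_add, mul_comm u,
    const_mul_eq_smul] at hcomm
  rw [eq_const_of_cyc_eq (smul_right_injective _ hc hcomm).symm i₀]
  rfl

section Order

variable (B : AddSubgroup ((Fin n → F) × (Fin n → F)))

def evenPart : AddSubgroup (Fin n → F) := B.comap (AddMonoidHom.inl _ _)

variable {B}

lemma mem_evenPart {x : Fin n → F} : x ∈ evenPart B ↔ (x, 0) ∈ B := Iff.rfl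

lemma exists_single_mem_evenPart [DecidableEq (Fin n)]
    (hloc : ∀ a, ∃ z ∈ bnnCenter₀ F n B, z ≠ 0 ∧ z ⋆ a ∈ B) {c : F} (hc : c ≠ 0)
    (hθ : oddScalar c ∈ B) (j : Fin n) : ∃ r ≠ 0, Pi.single j r ∈ evenPart B := by
  obtain ⟨z, hz, hz0, hzB⟩ := hloc (Pi.single j 1, 0)
  rw [eq_scalar_of_mem_bnnCenter₀ hc hθ hz j] at hz0 hzB
  refine ⟨z.1 j, fun h => hz0 (by simp [h, scalar]), mem_evenPart.mpr ?_⟩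
  simpa [← Pi.single_smul'] using hzB

variable (hmul : ∀ a ∈ B, ∀ b ∈ B, a ⋆ b ∈ B) {c : F} (hθ : oddScalar c ∈ B)
include hmul hθ

lemma sq_smul_cyc_mem_evenPart {x : Fin n → F} (hx : x ∈ evenPart B) :
    c ^ 2 • cyc x ∈ evenPart B := by
  have h := hmul _ hθ _ (hmul _ hθ _ (mem_evenPart.mp hx))
  rw [oddScalar_bnnMul_even, oddScalar_bnnMul_odd, smul_smul, ← sq] at h
  exact mem_evenPart.mpr h

lemma pow_smul_iterate_cyc_mem_evenPart {x : Fin n → F} (hx : x ∈ evenPart B) (k : ℕ) :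
    (c ^ 2) ^ k • cyc^[k] x ∈ evenPart B := by
  induction k with
  | zero => simpa using hx
  | succ k ih =>
    have h := sq_smul_cyc_mem_evenPart hmul hθ ih
    rwa [cyc_smul, smul_smul, ← pow_succ', ← iterate_succ_apply' cyc] at h

lemma pow_smul_mem_evenPart {x : Fin n → F} (hx : x ∈ evenPart B) (k : ℕ) :
    (c ^ 2) ^ k • x ∈ evenPart B := by
  have hsq : scalar (c ^ 2) ∈ B := by
    rw [sq, ← oddScalar_bnnMul_oddScalar]
    exact hmul _ hθ _ hθ
  induction k with
  | zero => simpa using hx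
  | succ k ih =>
    have h := hmul _ hsq _ (mem_evenPart.mp ih)
    rw [scalar_bnnMul, Prod.smul_mk, smul_zero, smul_smul, ← pow_succ'] at h
    exact mem_evenPart.mpr h

lemma scalar_mul_sum_mem_of_mem_evenPart {x : Fin n → F} (hx : x ∈ evenPart B) :
    scalar (c ^ (2 * n) * ∑ i, x i) ∈ B := by
  -- padding the `k`-th rotation by `(c ^ 2) ^ (n - k)` gives all `n` terms the same factor
  have hk (k : Fin n) : (c ^ 2) ^ n • cyc^[k] x ∈ evenPart B := by
    have h := pow_smul_mem_evenPart hmul hθ (pow_smul_iterate_cyc_mem_evenPart hmul hθ hx k) (n - k)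
    rwa [smul_smul, ← pow_add, Nat.sub_add_cancel k.is_le'] at h
  have h := sum_mem (t := Finset.univ) fun k _ => hk k
  rw [← Finset.smul_sum, sum_iterate_cyc, ← pow_mul] at h
  exact mem_evenPart.mp h

lemma scalar_mem_of_single_mem_evenPart [DecidableEq (Fin n)] {j : Fin n} {a : F}
    (h : Pi.single j a ∈ evenPart B) : scalar (c ^ (2 * n) * a) ∈ B := by
  simpa using scalar_mul_sum_mem_of_mem_evenPart hmul hθ h

omit hθ in
lemma single_mul_fst_mem_evenPart [DecidableEq (Fin n)] (hgraded : ∀ b ∈ B, (b.1, 0) ∈ B)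
    {j : Fin n} {r : F} (hr : Pi.single j r ∈ evenPart B) {b : (Fin n → F) × (Fin n → F)}
    (hb : b ∈ B) : Pi.single j (r * b.1 j) ∈ evenPart B := by
  have h := hgraded _ (hmul _ (mem_evenPart.mp hr) _ hb)
  rwa [single_bnnMul] at h

lemma single_mul_snd_mem_evenPart [DecidableEq (Fin n)] (hgraded : ∀ b ∈ B, (b.1, 0) ∈ B)
    {j : Fin n} {r : F} (hr : Pi.single j r ∈ evenPart B) {b : (Fin n → F) × (Fin n → F)}
    (hb : b ∈ B) : Pi.single j (c * r * b.2 j) ∈ evenPart B := by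
  have hrb := hmul _ (mem_evenPart.mp hr) _ hb
  have hodd := sub_mem hrb (hgraded _ hrb)
  rw [single_bnnMul, Prod.mk_sub_mk, sub_self, sub_zero] at hodd
  have h := hmul _ hθ _ hodd
  rwa [oddScalar_bnnMul_odd, ← Pi.single_smul', smul_eq_mul, ← mul_assoc] at h

end Order

lemma smul_eq_sum_scalar_bnnMul [DecidableEq (Fin n)] {r s : Fin n → F} (hr : ∀ j, r j ≠ 0)
    (hs : ∀ j, s j ≠ 0) (μ : F) (b : (Fin n → F) × (Fin n → F)) :
    μ • b = ∑ j, scalar (μ * (r j * b.1 j)) ⋆ (Pi.single j (r j)⁻¹, 0) +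
      ∑ j, scalar (μ * (s j * b.2 j)) ⋆ (0, Pi.single j (s j)⁻¹) := by
  ext i
  · simp [Prod.fst_sum, Finset.sum_apply, Pi.single_apply]
    field_simp [hr i]
  · simp [Prod.snd_sum, Finset.sum_apply, Pi.single_apply]
    field_simp [hs i]

end Bnn

open Bnn in
theorem bnn_central_order_embeds_general (F : Type*) [Field F] (n : ℕ)
    (B : Set ((Fin n → F) × (Fin n → F)))
    (haddB : ∀ a ∈ B, ∀ b ∈ B, a + b ∈ B) (hnegB : ∀ a ∈ B, -a ∈ B)
    (hmulB : ∀ a ∈ B, ∀ b ∈ B, bnnMul F n a b ∈ B)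
    -- B is graded: it contains the even and odd parts of each of its elements
    (hgraded : ∀ b ∈ B, ((b.1, 0) : (Fin n → F) × (Fin n → F)) ∈ B)
    -- Z⁻¹B is all of B_{n|n}: every element is a fraction over B
    (hloc : ∀ a : (Fin n → F) × (Fin n → F),
      ∃ z ∈ bnnCenter₀ F n B, z ≠ 0 ∧ bnnMul F n z a ∈ B) :
    ∃ z ∈ bnnCenter₀ F n B, z ≠ 0 ∧
      ∃ (m : ℕ) (g : Fin m → (Fin n → F) × (Fin n → F)),
        ∀ b ∈ B, ∃ c : Fin m → (Fin n → F) × (Fin n → F),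
          (∀ i, c i ∈ bnnCenter₀ F n B) ∧
          (fun x => bnnMul F n z x)^[2 * n] b = ∑ i, bnnMul F n (c i) (g i) := by
  obtain ⟨z, hz, hz0, hzB⟩ := hloc (oddScalar 1)
  obtain ⟨c, hc, rfl, hθ⟩ := exists_scalar_of_mem_bnnCenter₀ hz hz0 hzB
  have h0 : (0 : (Fin n → F) × (Fin n → F)) ∈ B := by simpa using haddB _ hz.1 _ (hnegB _ hz.1)
  let B' : AddSubgroup ((Fin n → F) × (Fin n → F)) :=
    { carrier := B
      add_mem' := fun ha hb => haddB _ ha _ hb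
      zero_mem' := h0
      neg_mem' := fun ha => hnegB _ ha }
  choose r hr hrB using exists_single_mem_evenPart (B := B') hloc hc hθ
  have hcoeff (b) (hb : b ∈ B) (j : Fin n) :
      scalar (c ^ (2 * n) * (r j * b.1 j)) ∈ bnnCenter₀ F n B ∧
        scalar (c ^ (2 * n) * (c * r j * b.2 j)) ∈ bnnCenter₀ F n B :=
    ⟨scalar_mem_bnnCenter₀ (scalar_mem_of_single_mem_evenPart hmulB hθ
      (single_mul_fst_mem_evenPart hmulB hgraded (hrB j) hb)),
    scalar_mem_bnnCenter₀ (scalar_mem_of_single_mem_evenPart hmulB hθ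
      (single_mul_snd_mem_evenPart hmulB hθ hgraded (hrB j) hb))⟩
  refine ⟨scalar c, hz, hz0, n + n,
    Fin.append (fun j => (Pi.single j (r j)⁻¹, 0)) (fun j => (0, Pi.single j (c * r j)⁻¹)),
    fun b hb => ⟨Fin.append (fun j => scalar (c ^ (2 * n) * (r j * b.1 j)))
      (fun j => scalar (c ^ (2 * n) * (c * r j * b.2 j))),
      Fin.addCases (fun j => by rw [Fin.append_left]; exact (hcoeff b hb j).1)
        (fun j => by rw [Fin.append_right]; exact (hcoeff b hb j).2), ?_⟩⟩
  rw [iterate_scalar_bnnMul, Fin.sum_univ_add]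
  simp only [Fin.append_left, Fin.append_right]
  exact smul_eq_sum_scalar_bnnMul hr (fun j => mul_ne_zero hc (hr j)) _ b

/-- If `B` is a right-alternative superalgebra which is a central order in
`B_{n|n}`, with `Z = Z(B)₀`, then there is a nonzero `z ∈ Z` with `z^{2n}·B`
contained in a finitely generated `Z`-submodule of `B_{n|n}`; consequently `B`
embeds in a finitely generated `Z`-module. -/
theorem bnn_central_order_embeds (F : Type*) [Field F] (n : ℕ) (hn : 1 < n)
    (B : Set ((Fin n → F) × (Fin n → F)))
    (haddB : ∀ a ∈ B, ∀ b ∈ B, a + b ∈ B) (hnegB : ∀ a ∈ B, -a ∈ B)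
    (hmulB : ∀ a ∈ B, ∀ b ∈ B, bnnMul F n a b ∈ B)
    -- B is graded: it contains the even and odd parts of each of its elements
    (hgraded : ∀ b ∈ B, ((b.1, 0) : (Fin n → F) × (Fin n → F)) ∈ B)
    -- Z contains no zero divisors of B
    (hnzd : ∀ z ∈ bnnCenter₀ F n B, z ≠ 0 → ∀ b ∈ B, bnnMul F n z b = 0 → b = 0)
    -- Z⁻¹B is all of B_{n|n}: every element is a fraction over B
    (hloc : ∀ a : (Fin n → F) × (Fin n → F),
      ∃ z ∈ bnnCenter₀ F n B, z ≠ 0 ∧ bnnMul F n z a ∈ B) :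
    ∃ z ∈ bnnCenter₀ F n B, z ≠ 0 ∧
      ∃ (m : ℕ) (g : Fin m → (Fin n → F) × (Fin n → F)),
        ∀ b ∈ B, ∃ c : Fin m → (Fin n → F) × (Fin n → F),
          (∀ i, c i ∈ bnnCenter₀ F n B) ∧
          (fun x => bnnMul F n z x)^[2 * n] b = ∑ i, bnnMul F n (c i) (g i) :=
  bnn_central_order_embeds_general F n B haddB hnegB hmulB hgraded hloc
end
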